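/- For any b > 0 and all x ∈ ℝ, the function f(x;b) = exp(−(b/√(2π))·e^{−x²/2}) · [e^{b²/2} Q(x−b) + 1 − Q(x)] satisfies f(x;b) ≤ e^{b²/2}, where Q is the standard Gaussian tail function. -/

import Mathlib

/-!
Write `φ` for the standard normal density and `A = exp (b²/2)`. Since `1 + bφ(x) ≤ exp (bφ(x))`,
it suffices that `Q(x-b) - Q(x) ≤ A b φ(x) + (A - 1)(1 - Q(x-b))`, and `Q(x-b) - Q(x)` is the
integral of `φ` over `(x-b, x]`. For `x ≤ b` every value of `φ` there is at most `A φ(x)`. For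
`x > b` the density is decreasing on the interval, so the integral is at most `b φ(x-b)`; the
shift identity `A φ(u+b) = exp(-ub) φ(u)` together with `u φ(u) ≤ 1/4` gives
`φ(x-b) ≤ A φ(x) + b/4`, and the remaining `b²/4` is absorbed by `(A - 1)(1 - Q(x-b)) ≥ b²/4`,
because `Q(x-b) ≤ Q(0) = 1/2`.
-/

noncomputable def gaussQ (x : ℝ) : ℝ :=
  ∫ t in Set.Ioi x, (1 / Real.sqrt (2 * Real.pi)) * Real.exp (-(t ^ 2) / 2)

open Real MeasureTheory Set ProbabilityTheory

noncomputable def stdNormalPDF (t : ℝ) : ℝ := 1 / √(2 * π) * exp (-(t ^ 2) / 2)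

lemma stdNormalPDF_eq_gaussianPDFReal : stdNormalPDF = gaussianPDFReal 0 1 := by
  ext t
  simp [stdNormalPDF, gaussianPDFReal]

lemma stdNormalPDF_nonneg (t : ℝ) : 0 ≤ stdNormalPDF t := by
  unfold stdNormalPDF; positivity

lemma integrable_stdNormalPDF : Integrable stdNormalPDF := by
  rw [stdNormalPDF_eq_gaussianPDFReal]
  exact integrable_gaussianPDFReal 0 1

lemma integral_stdNormalPDF : ∫ t, stdNormalPDF t = 1 := by
  rw [stdNormalPDF_eq_gaussianPDFReal]
  exact integral_gaussianPDFReal_eq_one 0 one_ne_zero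

lemma stdNormalPDF_neg (t : ℝ) : stdNormalPDF (-t) = stdNormalPDF t := by
  simp [stdNormalPDF]

lemma stdNormalPDF_le_of_sq_le {s t : ℝ} (h : s ^ 2 ≤ t ^ 2) :
    stdNormalPDF t ≤ stdNormalPDF s := by
  unfold stdNormalPDF
  gcongr

lemma stdNormalPDF_add (u b : ℝ) :
    stdNormalPDF (u + b) = exp (-(u * b) - b ^ 2 / 2) * stdNormalPDF u := by
  unfold stdNormalPDF
  rw [mul_left_comm, ← exp_add]
  ring_nf

lemma mul_exp_neg_sq_div_two_le (t : ℝ) : t * exp (-(t ^ 2) / 2) ≤ exp (-1 / 2) := by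
  have ht : t ≤ exp ((t ^ 2 - 1) / 2) := by
    nlinarith [add_one_le_exp ((t ^ 2 - 1) / 2), sq_nonneg (t - 1)]
  calc t * exp (-(t ^ 2) / 2) ≤ exp ((t ^ 2 - 1) / 2) * exp (-(t ^ 2) / 2) := by gcongr
    _ = exp (-1 / 2) := by rw [← exp_add]; ring_nf

-- Equivalent to `8 ≤ π e`.
lemma four_mul_exp_neg_half_le_sqrt_two_pi : 4 * exp (-1 / 2) ≤ √(2 * π) := by
  rw [le_sqrt (by positivity) (by positivity), mul_pow, ← exp_nat_mul]
  have := exp_neg_one_lt_d9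
  have := pi_gt_three
  norm_num at *
  linarith

lemma mul_stdNormalPDF_le (t : ℝ) : t * stdNormalPDF t ≤ 1 / 4 := by
  have hs : 0 < √(2 * π) := by positivity
  calc t * stdNormalPDF t = (t * exp (-(t ^ 2) / 2)) / √(2 * π) := by
        unfold stdNormalPDF; ring
    _ ≤ (√(2 * π) / 4) / √(2 * π) := by
        gcongr
        linarith [mul_exp_neg_sq_div_two_le t, four_mul_exp_neg_half_le_sqrt_two_pi]
    _ = 1 / 4 := by field_simp

lemma gaussQ_eq_setIntegral (x : ℝ) : gaussQ x = ∫ t in Ioi x, stdNormalPDF t := rfl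

lemma gaussQ_le_one (x : ℝ) : gaussQ x ≤ 1 := by
  rw [gaussQ_eq_setIntegral, ← integral_stdNormalPDF]
  exact setIntegral_le_integral integrable_stdNormalPDF (ae_of_all _ stdNormalPDF_nonneg)

lemma gaussQ_antitone : Antitone gaussQ := fun _ _ hxy =>
  setIntegral_mono_set integrable_stdNormalPDF.integrableOn (ae_of_all _ stdNormalPDF_nonneg)
    (ae_of_all _ (Ioi_subset_Ioi hxy))

lemma gaussQ_zero : gaussQ 0 = 1 / 2 := by
  have hsymm : ∫ t in Iic 0, stdNormalPDF t = ∫ t in Ioi 0, stdNormalPDF t := by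
    simpa [stdNormalPDF_neg] using (integral_comp_neg_Ioi 0 stdNormalPDF).symm
  have hsplit := intervalIntegral.integral_Iic_add_Ioi (b := 0)
    integrable_stdNormalPDF.integrableOn integrable_stdNormalPDF.integrableOn
  rw [integral_stdNormalPDF, hsymm] at hsplit
  rw [gaussQ_eq_setIntegral]
  linarith

lemma gaussQ_sub_gaussQ_le {a c C : ℝ} (hac : a ≤ c) (hC : ∀ t ∈ Ioc a c, stdNormalPDF t ≤ C) :
    gaussQ a - gaussQ c ≤ (c - a) * C := by
  have hsplit : gaussQ a = (∫ t in Ioc a c, stdNormalPDF t) + gaussQ c := by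
    rw [gaussQ_eq_setIntegral, gaussQ_eq_setIntegral, ← Ioc_union_Ioi_eq_Ioi hac,
      setIntegral_union (Ioc_disjoint_Ioi le_rfl) measurableSet_Ioi
        integrable_stdNormalPDF.integrableOn integrable_stdNormalPDF.integrableOn]
  have hbound : ∫ t in Ioc a c, stdNormalPDF t ≤ (c - a) * C := by
    calc ∫ t in Ioc a c, stdNormalPDF t ≤ ∫ _ in Ioc a c, C :=
          setIntegral_mono_on integrable_stdNormalPDF.integrableOn
            (integrableOn_const (by simp)) measurableSet_Ioc hC
      _ = (c - a) * C := by simp [Real.volume_real_Ioc_of_le hac]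
  linarith

lemma stdNormalPDF_le_exp_mul {x t b : ℝ} (h : x ^ 2 - t ^ 2 ≤ b ^ 2) :
    stdNormalPDF t ≤ exp (b ^ 2 / 2) * stdNormalPDF x := by
  unfold stdNormalPDF
  rw [mul_left_comm, ← exp_add]
  gcongr
  linarith

lemma stdNormalPDF_sub_exp_mul_le (u : ℝ) {b : ℝ} (hb : 0 ≤ b) :
    stdNormalPDF u - exp (b ^ 2 / 2) * stdNormalPDF (u + b) ≤ b / 4 := by
  have hshift : exp (b ^ 2 / 2) * stdNormalPDF (u + b) = exp (-(u * b)) * stdNormalPDF u := by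
    rw [stdNormalPDF_add, ← mul_assoc, ← exp_add]
    ring_nf
  rw [hshift]
  calc stdNormalPDF u - exp (-(u * b)) * stdNormalPDF u
        = (1 - exp (-(u * b))) * stdNormalPDF u := by ring
    _ ≤ u * b * stdNormalPDF u := by
        gcongr
        · exact stdNormalPDF_nonneg u
        · linarith [add_one_le_exp (-(u * b))]
    _ = b * (u * stdNormalPDF u) := by ring
    _ ≤ b * (1 / 4) := by gcongr; exact mul_stdNormalPDF_le u
    _ = b / 4 := by ring

-- For `t ∈ [x-b, x]` and `x ≤ b`: `x² - t² = b² - (b - x + t)² - 2 (x - t)(b - x) ≤ b²`.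
lemma gaussQ_sub_le_of_le {b x : ℝ} (hb : 0 ≤ b) (hx : x ≤ b) :
    gaussQ (x - b) - gaussQ x ≤ b * (exp (b ^ 2 / 2) * stdNormalPDF x) := by
  have h := gaussQ_sub_gaussQ_le (C := exp (b ^ 2 / 2) * stdNormalPDF x)
    (sub_le_self x hb) fun t ⟨ht₁, ht₂⟩ =>
      stdNormalPDF_le_exp_mul (by nlinarith [sq_nonneg (b - x + t)])
  rwa [sub_sub_cancel] at h

lemma gaussQ_sub_le_of_lt {b x : ℝ} (hb : 0 ≤ b) (hx : b < x) :
    gaussQ (x - b) - gaussQ x ≤ b * (exp (b ^ 2 / 2) * stdNormalPDF x) + b ^ 2 / 4 := by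
  have h := gaussQ_sub_gaussQ_le (C := stdNormalPDF (x - b))
    (sub_le_self x hb) fun t ⟨ht₁, ht₂⟩ =>
      stdNormalPDF_le_of_sq_le (by nlinarith)
  have hshift := stdNormalPDF_sub_exp_mul_le (x - b) hb
  rw [sub_sub_cancel] at h
  rw [sub_add_cancel] at hshift
  nlinarith

lemma gaussQ_sub_le {b : ℝ} (hb : 0 ≤ b) (x : ℝ) :
    gaussQ (x - b) - gaussQ x ≤
      b * (exp (b ^ 2 / 2) * stdNormalPDF x) + (exp (b ^ 2 / 2) - 1) * (1 - gaussQ (x - b)) := by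
  have hQ : gaussQ (x - b) ≤ 1 := gaussQ_le_one _
  have hA : 1 ≤ exp (b ^ 2 / 2) := one_le_exp (by positivity)
  rcases le_or_gt x b with hx | hx
  · have := gaussQ_sub_le_of_le hb hx
    nlinarith
  · have hhalf : gaussQ (x - b) ≤ 1 / 2 := gaussQ_zero ▸ gaussQ_antitone (by linarith)
    have hA' : b ^ 2 / 2 ≤ exp (b ^ 2 / 2) - 1 := by linarith [add_one_le_exp (b ^ 2 / 2)]
    have := gaussQ_sub_le_of_lt hb hx
    nlinarith

theorem stmt_5 (b : ℝ) (hb : 0 < b) (x : ℝ) :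
    Real.exp (-(b / Real.sqrt (2 * Real.pi)) * Real.exp (-(x ^ 2) / 2)) *
        (Real.exp (b ^ 2 / 2) * gaussQ (x - b) + 1 - gaussQ x)
      ≤ Real.exp (b ^ 2 / 2) := by
  set A := exp (b ^ 2 / 2)
  set y := b * stdNormalPDF x
  have hy : -(b / √(2 * π)) * exp (-(x ^ 2) / 2) = -y := by
    simp only [y, stdNormalPDF]; ring
  have hbracket : A * gaussQ (x - b) + 1 - gaussQ x ≤ A * exp y := by
    have := gaussQ_sub_le hb.le x
    nlinarith [add_one_le_exp y, exp_pos (b ^ 2 / 2)]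
  calc exp (-(b / √(2 * π)) * exp (-(x ^ 2) / 2)) * (A * gaussQ (x - b) + 1 - gaussQ x)
      ≤ exp (-y) * (A * exp y) := by rw [hy]; gcongr
    _ = A := by rw [mul_left_comm, ← exp_add, neg_add_cancel, exp_zero, mul_one]
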